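/- Let Φ be the cumulative distribution function of the standard normal distribution and φ(a) = (2π)^{−1/2} e^{−a²/2} its density. Then both functions a ↦ a⁴ φ(a)⁴ / (Φ(a)(1−Φ(a)))³ and a ↦ a² φ(a)² / (Φ(a)(1−Φ(a))) are bounded on ℝ. -/
import Mathlib


/-- The standard normal cumulative distribution function
`Φ(a) = ∫_{−∞}^a (2π)^{−1/2} e^{−t²/2} dt`. -/
noncomputable def stdNormalCDF (a : ℝ) : ℝ :=
  ∫ t in Set.Iic a, (Real.sqrt (2 * Real.pi))⁻¹ * Real.exp (-(t ^ 2) / 2)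

/-- The standard normal density `φ(a) = (2π)^{−1/2} e^{−a²/2}`. -/
noncomputable def stdNormalPDF (a : ℝ) : ℝ :=
  (Real.sqrt (2 * Real.pi))⁻¹ * Real.exp (-(a ^ 2) / 2)

open MeasureTheory Set Real Filter

lemma pdf_pos (a : ℝ) : 0 < stdNormalPDF a := by unfold stdNormalPDF; positivity

lemma pdf_integrable : Integrable stdNormalPDF := by
  have h := (integrable_exp_neg_mul_sq (show (0:ℝ) < 1/2 by norm_num)).const_mul
    (Real.sqrt (2 * Real.pi))⁻¹
  refine h.congr (Eventually.of_forall fun t => ?_)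
  unfold stdNormalPDF
  ring_nf

lemma pdf_total : ∫ t, stdNormalPDF t = 1 := by
  have h : (∫ t : ℝ, Real.exp (-(1/2) * t ^ 2)) = Real.sqrt (Real.pi / (1/2)) :=
    integral_gaussian (1/2)
  have h2 : (∫ t, stdNormalPDF t) = (Real.sqrt (2 * Real.pi))⁻¹ * ∫ t : ℝ, Real.exp (-(1/2) * t ^ 2) := by
    rw [← integral_const_mul]
    congr 1; funext t; unfold stdNormalPDF; ring_nf
  rw [h2, h]
  have : Real.pi / (1/2) = 2 * Real.pi := by ring
  rw [this]
  have hs : Real.sqrt (2 * Real.pi) ≠ 0 := by positivity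
  field_simp

lemma tail_eq (a : ℝ) : (∫ t in Set.Ioi a, stdNormalPDF t) = 1 - stdNormalCDF a := by
  have := intervalIntegral.integral_Iic_add_Ioi (b := a) pdf_integrable.integrableOn pdf_integrable.integrableOn
  rw [pdf_total] at this
  have hc : stdNormalCDF a = ∫ t in Set.Iic a, stdNormalPDF t := rfl
  rw [hc]; linarith

lemma cdf_mono {a b : ℝ} (h : a ≤ b) : stdNormalCDF a ≤ stdNormalCDF b := by
  unfold stdNormalCDF
  refine setIntegral_mono_set pdf_integrable.integrableOn
    (Eventually.of_forall fun t => (pdf_pos t).le) (HasSubset.Subset.eventuallyLE (Iic_subset_Iic.2 h))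

lemma pdf_anti {x y : ℝ} (hx : 0 ≤ x) (hxy : x ≤ y) : stdNormalPDF y ≤ stdNormalPDF x := by
  unfold stdNormalPDF
  have : -(y ^ 2) / 2 ≤ -(x ^ 2) / 2 := by nlinarith
  have := Real.exp_le_exp.2 this
  have hc : (0:ℝ) ≤ (Real.sqrt (2 * Real.pi))⁻¹ := by positivity
  exact mul_le_mul_of_nonneg_left ‹_› hc

lemma int_Ioc_ge {a b : ℝ} (ha : 0 ≤ a) (hab : a ≤ b) :
    (b - a) * stdNormalPDF b ≤ ∫ t in Set.Ioc a b, stdNormalPDF t := by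
  rw [← intervalIntegral.integral_of_le hab]
  have h := intervalIntegral.integral_mono_on hab
    (intervalIntegrable_const (c := stdNormalPDF b))
    (pdf_integrable.intervalIntegrable)
    (fun x hx => pdf_anti (le_trans ha hx.1) hx.2)
  simpa using h

lemma int_Ioc_pos {a b : ℝ} (hab : a < b) : 0 < ∫ t in Set.Ioc a b, stdNormalPDF t := by
  rw [← intervalIntegral.integral_of_le hab.le]
  exact intervalIntegral.intervalIntegral_pos_of_pos (pdf_integrable.intervalIntegrable) pdf_pos hab

lemma cdf_pos (a : ℝ) : 0 < stdNormalCDF a := by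
  have h1 : (∫ t in Set.Ioc (a-1) a, stdNormalPDF t) ≤ stdNormalCDF a := by
    refine setIntegral_mono_set pdf_integrable.integrableOn
      (Eventually.of_forall fun t => (pdf_pos t).le)
      (HasSubset.Subset.eventuallyLE ?_)
    exact fun x hx => hx.2
  exact lt_of_lt_of_le (int_Ioc_pos (by linarith)) h1

lemma tail_pos (a : ℝ) : stdNormalCDF a < 1 := by
  have h1 : (∫ t in Set.Ioc a (a+1), stdNormalPDF t) ≤ ∫ t in Set.Ioi a, stdNormalPDF t := by
    refine setIntegral_mono_set pdf_integrable.integrableOn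
      (Eventually.of_forall fun t => (pdf_pos t).le)
      (HasSubset.Subset.eventuallyLE Ioc_subset_Ioi_self)
  have h2 := int_Ioc_pos (show a < a+1 by linarith)
  have h3 := tail_eq a
  linarith


lemma exp_3half_le : Real.exp (3/2) ≤ 5 := by
  have h1 : Real.exp (3/2) * Real.exp (3/2) = Real.exp 3 := by
    rw [← Real.exp_add]; norm_num
  have h2 : Real.exp 1 * Real.exp 1 * Real.exp 1 = Real.exp 3 := by
    rw [← Real.exp_add, ← Real.exp_add]; norm_num
  have h3 := Real.exp_one_lt_d9
  have h4 := Real.exp_pos (3/2)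
  have h5 := Real.exp_pos 1
  nlinarith

lemma mills {a : ℝ} (ha : 1 ≤ a) : stdNormalPDF a / (5 * a) ≤ 1 - stdNormalCDF a := by
  have ha0 : 0 < a := lt_of_lt_of_le one_pos ha
  set b := a + a⁻¹ with hb
  have hab : a ≤ b := le_add_of_nonneg_right (by positivity)
  have h1 := int_Ioc_ge ha0.le hab
  have h2 : (∫ t in Set.Ioc a b, stdNormalPDF t) ≤ ∫ t in Set.Ioi a, stdNormalPDF t :=
    setIntegral_mono_set pdf_integrable.integrableOn
      (Eventually.of_forall fun t => (pdf_pos t).le)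
      (HasSubset.Subset.eventuallyLE Ioc_subset_Ioi_self)
  have h3 := tail_eq a
  -- φ b ≥ φ a / 5
  have h4 : stdNormalPDF a / 5 ≤ stdNormalPDF b := by
    unfold stdNormalPDF
    have hinv : a⁻¹ ≤ 1 := inv_le_one_of_one_le₀ ha
    have hinv0 : 0 < a⁻¹ := by positivity
    have harg : -(a^2)/2 - 3/2 ≤ -(b^2)/2 := by
      rw [hb]
      have : (a + a⁻¹)^2 = a^2 + 2*(a*a⁻¹) + a⁻¹^2 := by ring
      rw [mul_inv_cancel₀ ha0.ne'] at this
      nlinarith [hinv, hinv0]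
    have he : Real.exp (-(a^2)/2) / 5 ≤ Real.exp (-(b^2)/2) := by
      have : Real.exp (-(a^2)/2 - 3/2) ≤ Real.exp (-(b^2)/2) := Real.exp_le_exp.2 harg
      rw [Real.exp_sub] at this
      have h5 := exp_3half_le
      have h6 := Real.exp_pos (3/2 : ℝ)
      have h7 := Real.exp_pos (-(a^2)/2)
      calc Real.exp (-(a^2)/2) / 5 ≤ Real.exp (-(a^2)/2) / Real.exp (3/2) := by
            apply div_le_div_of_nonneg_left h7.le h6 h5
        _ ≤ Real.exp (-(b^2)/2) := this
    have hc : (0:ℝ) ≤ (Real.sqrt (2 * Real.pi))⁻¹ := by positivity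
    calc (Real.sqrt (2 * Real.pi))⁻¹ * Real.exp (-(a^2)/2) / 5
        = (Real.sqrt (2 * Real.pi))⁻¹ * (Real.exp (-(a^2)/2) / 5) := by ring
      _ ≤ (Real.sqrt (2 * Real.pi))⁻¹ * Real.exp (-(b^2)/2) := mul_le_mul_of_nonneg_left he hc
  -- combine
  have h5 : stdNormalPDF a / (5 * a) ≤ (b - a) * stdNormalPDF b := by
    have hba : b - a = a⁻¹ := by rw [hb]; ring
    rw [hba]
    calc stdNormalPDF a / (5 * a) = a⁻¹ * (stdNormalPDF a / 5) := by
          rw [inv_mul_eq_div, div_div]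
      _ ≤ a⁻¹ * stdNormalPDF b := mul_le_mul_of_nonneg_left h4 (by positivity)
  exact le_trans h5 (le_trans h1 (h3 ▸ h2))

lemma exp_quartic {x : ℝ} (hx : 0 ≤ x) : (x/4)^4 ≤ Real.exp x := by
  have h1 : Real.exp (x/4) ^ 4 = Real.exp x := by
    rw [← Real.exp_nat_mul]; congr 1; push_cast; ring
  have h2 : x/4 ≤ Real.exp (x/4) := le_trans (by linarith) (Real.add_one_le_exp (x/4))
  calc (x/4)^4 ≤ Real.exp (x/4)^4 := pow_le_pow_left₀ (by linarith) h2 4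
    _ = Real.exp x := h1

lemma poly_exp {a : ℝ} (ha : 1 ≤ a) : a^7 * Real.exp (-(a^2)/2) ≤ 4096 := by
  have h1 : (a^2/2/4)^4 ≤ Real.exp (a^2/2) := exp_quartic (by positivity)
  have h2 : a^8 / 4096 ≤ Real.exp (a^2/2) := by
    calc a^8/4096 = (a^2/2/4)^4 := by ring
      _ ≤ _ := h1
  have h3 : Real.exp (-(a^2)/2) = (Real.exp (a^2/2))⁻¹ := by
    rw [← Real.exp_neg]; ring_nf
  rw [h3]
  have hE := Real.exp_pos (a^2/2)
  rw [mul_inv_le_iff₀ hE]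
  have : a^7 ≤ a^8 := by nlinarith [pow_nonneg (le_trans zero_le_one ha) 7]
  nlinarith

lemma cdf_symm (a : ℝ) : stdNormalCDF (-a) = 1 - stdNormalCDF a := by
  rw [← tail_eq a]
  unfold stdNormalCDF
  have h : (∫ t in Set.Iic (-a), stdNormalPDF t) = ∫ t in Set.Iic (-a), stdNormalPDF (-t) := by
    apply setIntegral_congr_fun measurableSet_Iic
    intro t _
    unfold stdNormalPDF
    ring_nf
  have h2 := integral_comp_neg_Iic (-a) stdNormalPDF
  rw [neg_neg] at h2
  have hc : ∀ x, stdNormalPDF x = (Real.sqrt (2 * Real.pi))⁻¹ * Real.exp (-(x ^ 2) / 2) := fun _ => rfl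
  calc (∫ t in Set.Iic (-a), (Real.sqrt (2 * Real.pi))⁻¹ * Real.exp (-(t ^ 2) / 2))
      = ∫ t in Set.Iic (-a), stdNormalPDF t := rfl
    _ = ∫ t in Set.Iic (-a), stdNormalPDF (-t) := h
    _ = ∫ t in Set.Ioi a, stdNormalPDF t := h2

lemma pdf_le_exp (a : ℝ) : stdNormalPDF a ≤ Real.exp (-(a^2)/2) := by
  unfold stdNormalPDF
  have h1 : (Real.sqrt (2*Real.pi))⁻¹ ≤ 1 := by
    rw [inv_le_one_iff₀]
    right
    rw [Real.one_le_sqrt]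
    nlinarith [Real.pi_gt_three]
  exact mul_le_of_le_one_left (Real.exp_pos _).le h1

lemma pdf_le_one (a : ℝ) : stdNormalPDF a ≤ 1 :=
  le_trans (pdf_le_exp a) (Real.exp_le_one_iff.2 (by nlinarith [sq_nonneg a]))

lemma pdf_even (a : ℝ) : stdNormalPDF (-a) = stdNormalPDF a := by
  unfold stdNormalPDF; ring_nf

lemma cdf_half : stdNormalCDF 0 = 1/2 := by
  have := cdf_symm 0
  rw [neg_zero] at this
  linarith

lemma div_le_helper {N d D K : ℝ} (hN : 0 ≤ N) (hd : 0 < d) (hdD : d ≤ D) (h : N ≤ K * d) :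
    N / D ≤ K := by
  have h1 : N / D ≤ N / d := div_le_div_of_nonneg_left hN hd hdD
  have h2 : N / d ≤ K := (div_le_iff₀ hd).2 h
  linarith

lemma key2 {a : ℝ} (ha : 0 ≤ a) :
    a^2 * stdNormalPDF a^2 / (stdNormalCDF a * (1 - stdNormalCDF a)) ≤
      40960 + 10 / stdNormalPDF 1 := by
  have hφ1 := pdf_pos 1
  have hφa := pdf_pos a
  have hΦa := cdf_pos a
  have hΦa1 := tail_pos a
  have hN : 0 ≤ a^2 * stdNormalPDF a^2 := by positivity
  rcases le_total a 1 with h1 | h1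
  · -- small case
    have hm := mills (le_refl 1)
    have hc1 : 1/2 ≤ stdNormalCDF a := by
      have := cdf_mono ha; rw [cdf_half] at this; linarith
    have hc2 : stdNormalPDF 1 / 5 ≤ 1 - stdNormalCDF a := by
      have h2 := cdf_mono h1
      have : stdNormalPDF 1 / (5*1) = stdNormalPDF 1 / 5 := by norm_num
      linarith [this ▸ hm]
    have hdD : (1/2) * (stdNormalPDF 1 / 5) ≤ stdNormalCDF a * (1 - stdNormalCDF a) :=
      mul_le_mul hc1 hc2 (by positivity) hΦa.le
    have hKd : a^2 * stdNormalPDF a^2 ≤ (10 / stdNormalPDF 1) * ((1/2) * (stdNormalPDF 1 / 5)) := by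
      have heq : (10 / stdNormalPDF 1) * ((1/2) * (stdNormalPDF 1 / 5)) = 1 := by
        field_simp; norm_num
      rw [heq]
      have hp1 := pdf_le_one a
      have e1 : a^2 ≤ 1 := pow_le_one₀ ha h1
      have e2 : stdNormalPDF a^2 ≤ 1 := pow_le_one₀ hφa.le hp1
      nlinarith [pow_nonneg hφa.le 2, pow_nonneg ha 2]
    have := div_le_helper hN (by positivity) hdD hKd
    have h10 : (0:ℝ) ≤ 40960 := by norm_num
    linarith
  · -- big case
    have ha0 : 0 < a := lt_of_lt_of_le one_pos h1
    have hm := mills h1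
    have hc1 : 1/2 ≤ stdNormalCDF a := by
      have := cdf_mono ha; rw [cdf_half] at this; linarith
    have hdD : (1/2) * (stdNormalPDF a / (5*a)) ≤ stdNormalCDF a * (1 - stdNormalCDF a) :=
      mul_le_mul hc1 hm (by positivity) hΦa.le
    have h7 := poly_exp h1
    have hφe := pdf_le_exp a
    have ha3 : a^3 * stdNormalPDF a ≤ 4096 := by
      have hE := Real.exp_pos (-(a^2)/2)
      have h37 : a^3 ≤ a^7 := pow_le_pow_right₀ h1 (by norm_num)
      nlinarith [mul_le_mul_of_nonneg_left hφe (pow_nonneg ha0.le 3),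
        mul_le_mul_of_nonneg_right h37 hE.le]
    have hKd : a^2 * stdNormalPDF a^2 ≤ 40960 * ((1/2) * (stdNormalPDF a / (5*a))) := by
      have heq : 40960 * ((1/2) * (stdNormalPDF a / (5*a))) = 4096 * stdNormalPDF a / a := by
        field_simp; ring
      rw [heq, le_div_iff₀ ha0]
      nlinarith [mul_le_mul_of_nonneg_right ha3 hφa.le]
    have := div_le_helper hN (by positivity) hdD hKd
    have h10 : (0:ℝ) ≤ 10 / stdNormalPDF 1 := by positivity
    linarith

lemma key4 {a : ℝ} (ha : 0 ≤ a) :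
    a^4 * stdNormalPDF a^4 / (stdNormalCDF a * (1 - stdNormalCDF a))^3 ≤
      4096000 + 1000 / stdNormalPDF 1 ^ 3 := by
  have hφ1 := pdf_pos 1
  have hφa := pdf_pos a
  have hΦa := cdf_pos a
  have hΦa1 := tail_pos a
  have hN : 0 ≤ a^4 * stdNormalPDF a^4 := by positivity
  rcases le_total a 1 with h1 | h1
  · have hm := mills (le_refl 1)
    have hc1 : 1/2 ≤ stdNormalCDF a := by
      have := cdf_mono ha; rw [cdf_half] at this; linarith
    have hc2 : stdNormalPDF 1 / 5 ≤ 1 - stdNormalCDF a := by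
      have h2 := cdf_mono h1
      have : stdNormalPDF 1 / (5*1) = stdNormalPDF 1 / 5 := by norm_num
      linarith [this ▸ hm]
    have hdD' : (1/2) * (stdNormalPDF 1 / 5) ≤ stdNormalCDF a * (1 - stdNormalCDF a) :=
      mul_le_mul hc1 hc2 (by positivity) hΦa.le
    have hdD : ((1/2) * (stdNormalPDF 1 / 5))^3 ≤ (stdNormalCDF a * (1 - stdNormalCDF a))^3 :=
      pow_le_pow_left₀ (by positivity) hdD' 3
    have hKd : a^4 * stdNormalPDF a^4 ≤
        (1000 / stdNormalPDF 1 ^ 3) * (((1/2) * (stdNormalPDF 1 / 5))^3) := by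
      have heq : (1000 / stdNormalPDF 1 ^ 3) * (((1/2) * (stdNormalPDF 1 / 5))^3) = 1 := by
        field_simp; ring
      rw [heq]
      have hp1 := pdf_le_one a
      have e1 : a^4 ≤ 1 := pow_le_one₀ ha h1
      have e2 : stdNormalPDF a^4 ≤ 1 := pow_le_one₀ hφa.le hp1
      nlinarith [pow_nonneg hφa.le 4, pow_nonneg ha 4]
    have := div_le_helper hN (by positivity) hdD hKd
    have h10 : (0:ℝ) ≤ 4096000 := by norm_num
    linarith
  · have ha0 : 0 < a := lt_of_lt_of_le one_pos h1
    have hm := mills h1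
    have hc1 : 1/2 ≤ stdNormalCDF a := by
      have := cdf_mono ha; rw [cdf_half] at this; linarith
    have hdD' : (1/2) * (stdNormalPDF a / (5*a)) ≤ stdNormalCDF a * (1 - stdNormalCDF a) :=
      mul_le_mul hc1 hm (by positivity) hΦa.le
    have hdD : ((1/2) * (stdNormalPDF a / (5*a)))^3 ≤ (stdNormalCDF a * (1 - stdNormalCDF a))^3 :=
      pow_le_pow_left₀ (by positivity) hdD' 3
    have h7 := poly_exp h1
    have hφe := pdf_le_exp a
    have ha7 : a^7 * stdNormalPDF a ≤ 4096 := by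
      have hE := Real.exp_pos (-(a^2)/2)
      nlinarith [mul_le_mul_of_nonneg_left hφe (pow_nonneg ha0.le 7)]
    have hKd : a^4 * stdNormalPDF a^4 ≤
        4096000 * (((1/2) * (stdNormalPDF a / (5*a)))^3) := by
      have heq : 4096000 * (((1/2) * (stdNormalPDF a / (5*a)))^3)
          = 4096 * stdNormalPDF a ^ 3 / a ^ 3 := by
        field_simp; ring
      rw [heq, le_div_iff₀ (by positivity)]
      nlinarith [mul_le_mul_of_nonneg_right ha7 (pow_nonneg hφa.le 3)]
    have := div_le_helper hN (by positivity) hdD hKd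
    have h10 : (0:ℝ) ≤ 1000 / stdNormalPDF 1 ^ 3 := by positivity
    linarith

/-- Both `a ↦ a⁴ φ(a)⁴ / (Φ(a)(1−Φ(a)))³` and `a ↦ a² φ(a)² / (Φ(a)(1−Φ(a)))`
are bounded on `ℝ`. -/
theorem stmt_17 :
    (∃ C : ℝ, ∀ a : ℝ,
      |a ^ 4 * (stdNormalPDF a) ^ 4 / (stdNormalCDF a * (1 - stdNormalCDF a)) ^ 3| ≤ C) ∧
    (∃ C : ℝ, ∀ a : ℝ,
      |a ^ 2 * (stdNormalPDF a) ^ 2 / (stdNormalCDF a * (1 - stdNormalCDF a))| ≤ C) := by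
  constructor
  · refine ⟨4096000 + 1000 / stdNormalPDF 1 ^ 3, fun a => ?_⟩
    have hΦa := cdf_pos a
    have hΦa1 := tail_pos a
    have hD : 0 < stdNormalCDF a * (1 - stdNormalCDF a) := mul_pos hΦa (by linarith)
    rw [abs_of_nonneg (div_nonneg (by positivity) (by positivity))]
    rcases le_total 0 a with h | h
    · exact key4 h
    · have h2 := key4 (a := -a) (by linarith)
      rw [pdf_even, cdf_symm, show (-a)^4 = a^4 by ring,
        show (1 - stdNormalCDF a) * (1 - (1 - stdNormalCDF a))
          = stdNormalCDF a * (1 - stdNormalCDF a) by ring] at h2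
      exact h2
  · refine ⟨40960 + 10 / stdNormalPDF 1, fun a => ?_⟩
    have hΦa := cdf_pos a
    have hΦa1 := tail_pos a
    have hD : 0 < stdNormalCDF a * (1 - stdNormalCDF a) := mul_pos hΦa (by linarith)
    rw [abs_of_nonneg (div_nonneg (by positivity) hD.le)]
    rcases le_total 0 a with h | h
    · exact key2 h
    · have h2 := key2 (a := -a) (by linarith)
      rw [pdf_even, cdf_symm, show (-a)^2 = a^2 by ring,
        show (1 - stdNormalCDF a) * (1 - (1 - stdNormalCDF a))
          = stdNormalCDF a * (1 - stdNormalCDF a) by ring] at h2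
      exact h2
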